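/- Suppose Q satisfies Q(ξ_n−η)·Q(ξ_n+iπ) = −Q(ξ_n−η+iπ)·Q(ξ_n) for all n, and assume ξ_i − ξ_j ∉ iπℤ for i ≠ j, q_i − q_j ∉ iπℤ for i ≠ j, ξ_i − q_k ∉ iπℤ and ξ_i − q_k − η ∉ iπℤ for all i, k, and Q(ξ_n−η) ≠ 0 for all n. Then for every α ∈ ℂ the diagonal scalar product reduces to a twisted Izergin determinant: S(Q²,α) = det_{1≤i,k≤N} [ 1/sinh(ξ_i−q_k) − α/sinh(ξ_i−q_k−η) ] / det_{1≤i,k≤N} [ 1/sinh(ξ_i−q_k) ]. -/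

import Mathlib

open Complex Finset

noncomputable section

def Vand {m : ℕ} (x : Fin m → ℂ) : ℂ :=
  ∏ i : Fin m, ∏ j ∈ Finset.Ioi i, Complex.sinh (x j - x i)

def trigPoly {N : ℕ} (r : Fin N → ℂ) (l : ℂ) : ℂ := ∏ j, Complex.sinh ((l - r j) / 2)
def iπ : ℂ := (Real.pi : ℂ) * Complex.I

/-- the diagonal scalar product `S(Q²,α)` -/
def SPdiag {N : ℕ} (η : ℂ) (ξ : Fin N → ℂ) (Q : ℂ → ℂ) (α : ℂ) : ℂ :=
  ∑ h : Fin N → Fin 2,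
    (∏ n, (α * Q (ξ n) ^ 2 / Q (ξ n - η) ^ 2) ^ (1 - (h n : ℕ))) *
      Vand (fun n => ξ n - ((1 - (h n : ℕ) : ℕ) : ℂ) * η) / Vand ξ

/-!
Expanding every row of the numerator by multilinearity writes it as a sum, over
`h ∈ {0,1}^N`, of determinants `det [c_i / sinh (w_i - q_k)]` with `w_i = ξ_i - (1 - h_i) η`
and `c_i = (-α)^(1 - h_i)`. Each of these is a trigonometric Cauchy determinant
`Vand w · Vand (-q) / ∏ sinh (w_i - q_k)` (the rational Cauchy determinant after the
substitution `x = exp (2 u)`), so dividing by the `h ≡ 1` term leaves `Vand w / Vand ξ` times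
one factor per shifted row. Since `∏_k sinh (z - q_k) = (-2i)^N Q(z) Q(z + iπ)`, the quasi-periodicity of `Q` turns that
factor into `α Q(ξ_i)² / Q(ξ_i - η)²`, the weight in `S(Q², α)`.
-/

theorem Finset.prod_prod_erase_eq_prod_prod_Ioi {α M : Type*} [Fintype α] [LinearOrder α]
    [LocallyFiniteOrderTop α] [LocallyFiniteOrderBot α] [CommMonoid M] (f : α → α → M) :
    ∏ i, ∏ j ∈ univ.erase i, f i j = ∏ i, ∏ j ∈ Ioi i, f i j * f j i := by
  have hswap : ∏ i, ∏ j ∈ Iio i, f i j = ∏ j, ∏ i ∈ Ioi j, f i j :=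
    prod_comm' fun i j => by simp [and_comm]
  simp_rw [← compl_singleton, ← Ioi_disjUnion_Iio, prod_disjUnion, prod_mul_distrib, hswap]

theorem Matrix.eval_matrixOfPolynomials_eq_vandermonde_mul_of_natDegree_lt {R : Type*}
    [CommRing R] {n : ℕ} (v : Fin n → R) (p : Fin n → Polynomial R)
    (h : ∀ j, (p j).natDegree < n) :
    Matrix.of (fun i j => (p j).eval (v i)) =
      vandermonde v * Matrix.of (fun i j : Fin n => (p j).coeff i) := by
  ext i j
  rw [mul_apply, of_apply, Polynomial.eval_eq_sum_range' (h j), ← Fin.sum_univ_eq_sum_range]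
  exact sum_congr rfl fun k _ => mul_comm _ _

theorem Matrix.det_of_sum_rows {n ι R : Type*} [Fintype n] [DecidableEq n] [Fintype ι]
    [CommRing R] (g : n → ι → n → R) :
    (Matrix.of fun i => ∑ t, g i t).det = ∑ h : n → ι, (Matrix.of fun i => g i (h i)).det :=
  (detRowAlternating : (n → R) [⋀^n]→ₗ[R] R).toMultilinearMap.map_sum g

theorem Complex.exp_two_mul_sub_exp_two_mul (a b : ℂ) :
    exp (2 * a) - exp (2 * b) = 2 * exp a * exp b * sinh (a - b) := by
  rw [sinh, show 2 * a = a + b + (a - b) by ring, show 2 * b = a + b + -(a - b) by ring,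
    exp_add, exp_add, exp_add, exp_add]
  ring

theorem Complex.sinh_ne_zero_of_ne_int_mul_iπ {z : ℂ} (h : ∀ m : ℤ, z ≠ m * iπ) :
    sinh z ≠ 0 := by
  intro h0
  obtain ⟨k, hk⟩ := sin_eq_zero_iff.mp (by rw [sin_mul_I, h0, zero_mul] : sin (z * I) = 0)
  apply h (-k)
  rw [iπ]
  push_cast
  linear_combination (-I) * hk + z * I_sq

theorem Complex.sinh_eq_sinh_half_mul_sinh_half_add_iπ (z : ℂ) :
    sinh z = -2 * I * (sinh (z / 2) * sinh ((z + iπ) / 2)) := by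
  have : sinh ((z + iπ) / 2) = I * cosh (z / 2) := by
    rw [iπ, show (z + Real.pi * I) / 2 = z / 2 + (Real.pi / 2 : ℝ) * I by push_cast; ring,
      sinh_add, sinh_mul_I, cosh_mul_I, ← ofReal_cos, ← ofReal_sin, Real.cos_pi_div_two,
      Real.sin_pi_div_two]
    simp [mul_comm]
  rw [this, show z = 2 * (z / 2) by ring, sinh_two_mul]
  ring_nf
  rw [I_sq]
  ring

open Polynomial in
theorem Matrix.det_cauchy {K : Type*} [Field K] {n : ℕ} (x y : Fin n → K)
    (hxy : ∀ i k, x i - y k ≠ 0) :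
    (Matrix.of fun i k => (x i - y k)⁻¹).det =
      (∏ i, ∏ j ∈ Ioi i, (x j - x i) * (y i - y j)) / ∏ i, ∏ k, (x i - y k) := by
  by_cases hx : Function.Injective x
  swap
  · obtain ⟨i, j, hij, hne⟩ : ∃ i j, x i = x j ∧ i ≠ j := by
      simpa [Function.Injective, and_comm] using hx
    have hnum : ∏ i, ∏ j ∈ Ioi i, (x j - x i) * (y i - y j) = 0 := by
      rw [← det_vandermonde_ne_zero_iff, not_not, det_vandermonde] at hx
      simp only [prod_mul_distrib, hx, zero_mul]
    rw [det_zero_of_row_eq hne (funext fun k => by simp [hij]), hnum, zero_div]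
  -- `(x i - y k)⁻¹ = p i (y k) / ∏ l, (x l - y k)`, and `p i (x j) = 0` for `j ≠ i`.
  set p : Fin n → K[X] := fun i => ∏ l ∈ univ.erase i, (C (x l) - X) with hp
  have hp_eval (z : K) (i : Fin n) : (p i).eval z = ∏ l ∈ univ.erase i, (x l - z) := by
    simp [hp, eval_prod]
  have hp_deg (i : Fin n) : (p i).natDegree < n := by
    have : (p i).natDegree ≤ n - 1 := by
      refine (natDegree_prod_le _ _).trans ?_
      simp_rw [← neg_sub X, natDegree_neg, natDegree_X_sub_C]
      simp
    have := i.isLt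
    omega
  set Cf : Matrix (Fin n) (Fin n) K := Matrix.of fun m i => (p i).coeff m
  have hCf : Cf.det = ∏ i, ∏ j ∈ Ioi i, (x i - x j) := by
    have hdiag : Matrix.of (fun i j => (p j).eval (x i)) =
        diagonal fun i => ∏ l ∈ univ.erase i, (x l - x i) := by
      ext i j
      rcases eq_or_ne i j with rfl | hij
      · simp [hp_eval]
      · rw [diagonal_apply_ne _ hij, of_apply, hp_eval]
        exact prod_eq_zero (mem_erase.mpr ⟨hij, mem_univ i⟩) (sub_self _)
    have := congrArg det hdiag
    rw [eval_matrixOfPolynomials_eq_vandermonde_mul_of_natDegree_lt x p hp_deg, det_mul,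
      det_diagonal, prod_prod_erase_eq_prod_prod_Ioi, prod_congr rfl fun i _ => prod_mul_distrib,
      prod_mul_distrib, ← det_vandermonde] at this
    exact mul_left_cancel₀ (det_vandermonde_ne_zero_iff.mpr hx) this
  have hrows : (Matrix.of fun i k => (x i - y k)⁻¹) =
      Matrix.of fun i k =>
        (∏ l, (x l - y k))⁻¹ * Matrix.of (fun i k => (p i).eval (y k)) i k := by
    ext i k
    rw [of_apply, of_apply, of_apply, hp_eval, ← mul_prod_erase _ _ (mem_univ i), mul_inv,
      inv_mul_cancel_right₀ (prod_ne_zero_iff.mpr fun l _ => hxy l k)]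
  have hdet_eval :
      (Matrix.of fun i k => (p i).eval (y k)).det = (vandermonde y).det * Cf.det := by
    rw [← det_transpose, ← det_mul,
      ← eval_matrixOfPolynomials_eq_vandermonde_mul_of_natDegree_lt y p hp_deg]
    rfl
  rw [hrows, det_mul_row, hdet_eval, hCf, det_vandermonde, ← prod_mul_distrib, prod_inv_distrib,
    inv_mul_eq_div, prod_comm (s := univ) (t := univ) (f := fun k l => x l - y k)]
  congr 1
  refine prod_congr rfl fun i _ => ?_
  rw [← prod_mul_distrib]
  exact prod_congr rfl fun j _ => by ring

theorem Matrix.det_cauchy_sinh {n : ℕ} (u v : Fin n → ℂ)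
    (hs : ∀ i k, sinh (u i - v k) ≠ 0) :
    (Matrix.of fun i k => (sinh (u i - v k))⁻¹).det =
      Vand u * Vand (-v) / ∏ i, ∏ k, sinh (u i - v k) := by
  set g : Fin n → Fin n → ℂ := fun i k => 2 * exp (u i) * exp (v k) with hg
  have hg_ne (i k) : g i k ≠ 0 := by simp [hg, exp_ne_zero]
  have hxy (i k) : exp (2 * u i) - exp (2 * v k) = g i k * sinh (u i - v k) :=
    exp_two_mul_sub_exp_two_mul _ _
  have hentries : (Matrix.of fun i k => (sinh (u i - v k))⁻¹) =
      Matrix.of fun i k => 2 * exp (u i) * Matrix.of (fun i k => exp (v k) *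
        Matrix.of (fun i k => (exp (2 * u i) - exp (2 * v k))⁻¹) i k) i k := by
    ext i k
    simp only [of_apply, hxy, hg, mul_inv]
    field_simp
  have hnum : ∏ i, ∏ j ∈ Ioi i,
      (exp (2 * u j) - exp (2 * u i)) * (exp (2 * v i) - exp (2 * v j)) =
        (∏ i, ∏ j ∈ Ioi i, g i j * g j i) * (Vand u * Vand (-v)) := by
    simp only [Vand, ← prod_mul_distrib, exp_two_mul_sub_exp_two_mul, Pi.neg_apply, neg_sub_neg]
    exact prod_congr rfl fun i _ => prod_congr rfl fun j _ => by ring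
  have hg_prod : ∏ i, ∏ k, g i k = (∏ i, g i i) * ∏ i, ∏ j ∈ Ioi i, g i j * g j i := by
    rw [← prod_prod_erase_eq_prod_prod_Ioi, ← prod_mul_distrib]
    exact prod_congr rfl fun i _ => (mul_prod_erase _ _ (mem_univ i)).symm
  have hden : ∏ i, ∏ k, (exp (2 * u i) - exp (2 * v k)) =
      ((∏ i, g i i) * ∏ i, ∏ j ∈ Ioi i, g i j * g j i) *
        ∏ i, ∏ k, sinh (u i - v k) := by
    simp only [hxy, ← hg_prod, ← prod_mul_distrib]
  have hdiag : (∏ i, 2 * exp (u i)) * ∏ k, exp (v k) = ∏ i, g i i := prod_mul_distrib.symm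
  rw [hentries, det_mul_column, det_mul_row,
    det_cauchy _ _ fun i k => by rw [hxy]; exact mul_ne_zero (hg_ne i k) (hs i k), hnum, hden,
    ← mul_assoc, hdiag]
  have : ∏ i, ∏ j ∈ Ioi i, g i j * g j i ≠ 0 :=
    prod_ne_zero_iff.mpr fun i _ => prod_ne_zero_iff.mpr fun j _ =>
      mul_ne_zero (hg_ne i j) (hg_ne j i)
  have : ∏ i, g i i ≠ 0 := prod_ne_zero_iff.mpr fun i _ => hg_ne i i
  field_simp

theorem prod_sinh_sub_eq_trigPoly_mul {N : ℕ} (q : Fin N → ℂ) (z : ℂ) :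
    ∏ k, sinh (z - q k) = (-2 * I) ^ N * (trigPoly q z * trigPoly q (z + iπ)) := by
  simp only [trigPoly, sinh_eq_sinh_half_mul_sinh_half_add_iπ (z - _), prod_mul_distrib,
    prod_const, card_univ, Fintype.card_fin, add_sub_right_comm z iπ, mul_pow]

theorem trigPoly_ratio_pow_mul_prod_sinh {N : ℕ} (q : Fin N → ℂ) (η α z : ℂ)
    (hη : trigPoly q (z - η) ≠ 0)
    (hper : trigPoly q (z - η) * trigPoly q (z + iπ) =
      -(trigPoly q (z - η + iπ) * trigPoly q z))
    (t : Fin 2) :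
    (α * trigPoly q z ^ 2 / trigPoly q (z - η) ^ 2) ^ (1 - (t : ℕ)) *
        ∏ k, sinh (z - ((1 - (t : ℕ) : ℕ) : ℂ) * η - q k) =
      (-α) ^ (1 - (t : ℕ)) * ∏ k, sinh (z - q k) := by
  fin_cases t
  · simp only [Nat.sub_zero, pow_one, Nat.cast_one, one_mul, prod_sinh_sub_eq_trigPoly_mul]
    field_simp
    linear_combination (α * trigPoly q z) * hper
  · simp

theorem prod_mul_Vand_div_Vand_eq_det_div_det {n : ℕ} (u ξ v P c : Fin n → ℂ)
    (hu : ∀ i k, sinh (u i - v k) ≠ 0) (hξ : ∀ i k, sinh (ξ i - v k) ≠ 0)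
    (hv : Vand (-v) ≠ 0)
    (hPc : ∀ i, P i * ∏ k, sinh (u i - v k) = c i * ∏ k, sinh (ξ i - v k)) :
    (∏ i, P i) * Vand u / Vand ξ =
      (Matrix.of fun i k => c i * (sinh (u i - v k))⁻¹).det /
        (Matrix.of fun i k => (sinh (ξ i - v k))⁻¹).det := by
  have hprod : (∏ i, P i) * ∏ i, ∏ k, sinh (u i - v k) =
      (∏ i, c i) * ∏ i, ∏ k, sinh (ξ i - v k) := by
    simp only [← prod_mul_distrib, hPc]
  have hDu : ∏ i, ∏ k, sinh (u i - v k) ≠ 0 :=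
    prod_ne_zero_iff.mpr fun i _ => prod_ne_zero_iff.mpr fun k _ => hu i k
  have hDξ : ∏ i, ∏ k, sinh (ξ i - v k) ≠ 0 :=
    prod_ne_zero_iff.mpr fun i _ => prod_ne_zero_iff.mpr fun k _ => hξ i k
  have hdet := Matrix.det_mul_column c (Matrix.of fun i k => (sinh (u i - v k))⁻¹)
  simp only [Matrix.of_apply] at hdet
  rw [hdet, Matrix.det_cauchy_sinh u v hu, Matrix.det_cauchy_sinh ξ v hξ]
  field_simp
  linear_combination Vand u / Vand ξ * hprod

theorem diagonal_scalar_product_izergin_general (N : ℕ) (η : ℂ)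
    (ξ q : Fin N → ℂ) (Q : ℂ → ℂ) (hQ : Q = trigPoly q)
    (hQξη : ∀ n, Q (ξ n - η) ≠ 0)
    (hQper : ∀ n, Q (ξ n - η) * Q (ξ n + iπ) = -(Q (ξ n - η + iπ) * Q (ξ n)))
    (hqq : ∀ i j, i ≠ j → ∀ m : ℤ, q i - q j ≠ (m : ℂ) * iπ)
    (hξq : ∀ i k, ∀ m : ℤ, ξ i - q k ≠ (m : ℂ) * iπ)
    (hξqη : ∀ i k, ∀ m : ℤ, ξ i - q k - η ≠ (m : ℂ) * iπ)
    (α : ℂ) :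
    SPdiag η ξ Q α =
      Matrix.det (Matrix.of (fun i k : Fin N =>
          1 / Complex.sinh (ξ i - q k) - α / Complex.sinh (ξ i - q k - η))) /
        Matrix.det (Matrix.of (fun i k : Fin N => 1 / Complex.sinh (ξ i - q k))) := by
  subst hQ
  have hsinh (t : Fin 2) (i k : Fin N) :
      sinh (ξ i - ((1 - (t : ℕ) : ℕ) : ℂ) * η - q k) ≠ 0 := by
    refine sinh_ne_zero_of_ne_int_mul_iπ fun m => ?_
    fin_cases t
    · simpa [sub_right_comm] using hξqη i k m
    · simpa using hξq i k m
  have hVq : Vand (-q) ≠ 0 :=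
    prod_ne_zero_iff.mpr fun i _ => prod_ne_zero_iff.mpr fun j hj =>
      sinh_ne_zero_of_ne_int_mul_iπ <| by simpa [neg_add_eq_sub] using hqq i j (mem_Ioi.mp hj).ne
  have hrows : (Matrix.of fun i k => 1 / sinh (ξ i - q k) - α / sinh (ξ i - q k - η)) =
      Matrix.of fun i => ∑ t : Fin 2, fun k => (-α) ^ (1 - (t : ℕ)) *
        (sinh (ξ i - ((1 - (t : ℕ) : ℕ) : ℂ) * η - q k))⁻¹ := by
    ext i k
    simp only [Matrix.of_apply, Fin.sum_univ_two, Pi.add_apply, Fin.val_zero, Fin.val_one,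
      Nat.sub_zero, Nat.sub_self, Nat.cast_one, Nat.cast_zero, pow_zero, pow_one, one_mul,
      zero_mul, sub_zero, sub_right_comm]
    ring
  rw [hrows, Matrix.det_of_sum_rows, sum_div, SPdiag]
  refine sum_congr rfl fun h _ => ?_
  simpa only [one_div, Fin.val_one, Nat.sub_self, Nat.cast_zero, zero_mul, sub_zero] using
    prod_mul_Vand_div_Vand_eq_det_div_det _ ξ q _ _ (fun i => hsinh (h i) i)
      (fun i k => sinh_ne_zero_of_ne_int_mul_iπ (hξq i k)) hVq
      fun i => trigPoly_ratio_pow_mul_prod_sinh q η α (ξ i) (hQξη i) (hQper i) (h i)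

/-- The diagonal scalar product reduces to a twisted Izergin
determinant. -/
theorem diagonal_scalar_product_izergin (N : ℕ) (hN : 1 ≤ N) (η : ℂ)
    (ξ q : Fin N → ℂ) (Q : ℂ → ℂ) (hQ : Q = trigPoly q)
    (hV : Vand ξ ≠ 0)
    (hQξη : ∀ n, Q (ξ n - η) ≠ 0)
    (hQper : ∀ n, Q (ξ n - η) * Q (ξ n + iπ) = -(Q (ξ n - η + iπ) * Q (ξ n)))
    (hξξ : ∀ i j, i ≠ j → ∀ m : ℤ, ξ i - ξ j ≠ (m : ℂ) * iπ)
    (hqq : ∀ i j, i ≠ j → ∀ m : ℤ, q i - q j ≠ (m : ℂ) * iπ)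
    (hξq : ∀ i k, ∀ m : ℤ, ξ i - q k ≠ (m : ℂ) * iπ)
    (hξqη : ∀ i k, ∀ m : ℤ, ξ i - q k - η ≠ (m : ℂ) * iπ)
    (α : ℂ) :
    SPdiag η ξ Q α =
      Matrix.det (Matrix.of (fun i k : Fin N =>
          1 / Complex.sinh (ξ i - q k) - α / Complex.sinh (ξ i - q k - η))) /
        Matrix.det (Matrix.of (fun i k : Fin N => 1 / Complex.sinh (ξ i - q k))) :=
  diagonal_scalar_product_izergin_general N η ξ q Q hQ hQξη hQper hqq hξq hξqη α

end
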